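/- arXiv:hep-lat/9205005 — 5 statements merged into one kernel-verified Lean document; each statement's English description precedes it below -/
import Mathlib

section
/- Let T be an orthogonal matrix in O(N) with T^2 = -I. Then N is even, T is antisymmetric, and there exists R in O(N) such that R T R^{-1} = J, where J is the block matrix with blocks [[0, I],[-I, 0]] and I is the (N/2)×(N/2) identity matrix. -/
/-!
Comparing determinants in `T * T = -1` gives `det T ^ 2 = (-1) ^ N`, so `N` is even, and
`Tᵀ = T⁻¹ = -T`. Skew-symmetry makes `x ⬝ᵥ T x = 0`, so one can pick, one at a time, unit
vectors `v₁, …, v_{N/2}` orthogonal to all earlier `vᵢ` and `T vᵢ` (these span at most `N - 2`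
dimensions). The matrix `R` with rows `v₁, …, v_{N/2}, -T v₁, …, -T v_{N/2}` is then orthogonal,
and the entries `rᵢ ⬝ᵥ T rⱼ` of `R T Rᵀ` are exactly those of `J`.
-/

open Matrix

/-- The block matrix `J = [[0, I], [-I, 0]]` where `I` is the `(N/2) × (N/2)` identity,
viewed as an `N × N` real matrix (for `N` even). -/
def stdJ (N : ℕ) : Matrix (Fin N) (Fin N) ℝ :=
  Matrix.of fun i j : Fin N =>
    if (i : ℕ) + N / 2 = (j : ℕ) then (1 : ℝ)
    else if (j : ℕ) + N / 2 = (i : ℕ) then -1 else 0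

namespace Matrix

variable {m n R : Type*} [Fintype n]

theorem even_card_of_mul_self_eq_neg_one [DecidableEq n] [CommRing R] [LinearOrder R]
    [IsStrictOrderedRing R] {A : Matrix n n R} (h : A * A = -1) : Even (Fintype.card n) := by
  by_contra hodd
  have hdet : A.det * A.det = -1 := by
    rw [← det_mul, h, det_neg, det_one, mul_one, (Nat.not_even_iff_odd.mp hodd).neg_one_pow]
  nlinarith [mul_self_nonneg A.det]

theorem transpose_eq_neg_of_mem_orthogonalGroup [DecidableEq n] [CommRing R] {A : Matrix n n R}
    (hA : A ∈ orthogonalGroup n R) (h : A * A = -1) : Aᵀ = -A :=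
  calc Aᵀ = Aᵀ * -(A * A) := by rw [h, neg_neg, mul_one]
    _ = -((Aᵀ * A) * A) := by noncomm_ring
    _ = -A := by rw [(mem_orthogonalGroup_iff' n R).mp hA, one_mul]

theorem mul_transpose_apply_eq_dotProduct [NonUnitalSemiring R] (A : Matrix m n R) (i j : m) :
    (A * Aᵀ) i j = A i ⬝ᵥ A j :=
  rfl

theorem mul_mul_transpose_apply_eq_dotProduct [NonUnitalSemiring R] (A : Matrix m n R)
    (B : Matrix n n R) (i j : m) : (A * B * Aᵀ) i j = A i ⬝ᵥ B *ᵥ A j := by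
  rw [mul_apply', dotProduct_mulVec]
  rfl

theorem dotProduct_mulVec_eq_neg_of_transpose_eq_neg [CommRing R] {T : Matrix n n R}
    (hT : Tᵀ = -T) (x y : n → R) : x ⬝ᵥ T *ᵥ y = -(T *ᵥ x ⬝ᵥ y) := by
  rw [dotProduct_mulVec, ← mulVec_transpose, hT, neg_mulVec, neg_dotProduct]

theorem exists_dotProduct_self_eq_one_of_card_lt {ι : Type*} [Fintype ι] (w : ι → n → ℝ)
    (h : Fintype.card ι < Fintype.card n) :
    ∃ u : n → ℝ, u ⬝ᵥ u = 1 ∧ ∀ s, w s ⬝ᵥ u = 0 := by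
  have hker : LinearMap.ker (mulVecLin (of w)) ≠ ⊥ :=
    LinearMap.ker_ne_bot_of_finrank_lt (by simpa using h)
  obtain ⟨x, hx, hx0⟩ := Submodule.exists_mem_ne_zero_of_ne_bot hker
  have hpos : 0 < x ⬝ᵥ x := by simpa using dotProduct_self_star_pos_iff.mpr hx0
  refine ⟨(√(x ⬝ᵥ x))⁻¹ • x, ?_, fun s => ?_⟩
  · rw [smul_dotProduct, dotProduct_smul, smul_eq_mul, smul_eq_mul, ← mul_assoc, ← mul_inv,
      Real.mul_self_sqrt hpos.le, inv_mul_cancel₀ hpos.ne']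
  · rw [dotProduct_smul, show w s ⬝ᵥ x = 0 from congrFun hx s, smul_zero]

theorem exists_orthonormal_family_dotProduct_mulVec_eq_zero {T : Matrix n n ℝ} (hT : Tᵀ = -T)
    (k : ℕ) (hk : 2 * k ≤ Fintype.card n) :
    ∃ v : Fin k → n → ℝ, (∀ i j, v i ⬝ᵥ v j = if i = j then 1 else 0) ∧
      ∀ i j, v i ⬝ᵥ T *ᵥ v j = 0 := by
  induction k with
  | zero => exact ⟨Fin.elim0, fun i => i.elim0, fun i => i.elim0⟩
  | succ k ih =>
    obtain ⟨v, hv, hvT⟩ := ih (by omega)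
    obtain ⟨u, hu, hw⟩ := exists_dotProduct_self_eq_one_of_card_lt
      (Sum.elim v fun i => T *ᵥ v i) (by simp only [Fintype.card_sum, Fintype.card_fin]; omega)
    have hvu (i : Fin k) : v i ⬝ᵥ u = 0 := hw (.inl i)
    have hTvu (i : Fin k) : T *ᵥ v i ⬝ᵥ u = 0 := hw (.inr i)
    have hvTu (i : Fin k) : v i ⬝ᵥ T *ᵥ u = 0 := by
      rw [dotProduct_mulVec_eq_neg_of_transpose_eq_neg hT, hTvu, neg_zero]
    have huTu : u ⬝ᵥ T *ᵥ u = 0 := by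
      have := dotProduct_mulVec_eq_neg_of_transpose_eq_neg hT u u
      rw [dotProduct_comm (T *ᵥ u)] at this
      linarith
    refine ⟨Fin.snoc v u, ?_, ?_⟩ <;>
      simp [Fin.forall_fin_succ', hv, hvT, hvu, hvTu, huTu, hu, dotProduct_comm u, hTvu,
        Fin.castSucc_ne_last, (Fin.castSucc_ne_last _).symm]

theorem exists_mem_orthogonalGroup_mul_mul_inv_eq_stdJ {t : ℕ}
    {T : Matrix (Fin (t + t)) (Fin (t + t)) ℝ} (hT : Tᵀ = -T) (hsq : T * T = -1) :
    ∃ R ∈ orthogonalGroup (Fin (t + t)) ℝ, R * T * R⁻¹ = stdJ (t + t) := by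
  obtain ⟨v, hv, hvT⟩ := exists_orthonormal_family_dotProduct_mulVec_eq_zero hT t
    (by simp only [Fintype.card_fin]; omega)
  have hTT (x : Fin (t + t) → ℝ) : T *ᵥ T *ᵥ x = -x := by
    rw [mulVec_mulVec, hsq, neg_mulVec, one_mulVec]
  have hTvT (i j : Fin t) : T *ᵥ v i ⬝ᵥ T *ᵥ v j = v i ⬝ᵥ v j := by
    rw [← neg_neg (T *ᵥ v i ⬝ᵥ _), ← dotProduct_mulVec_eq_neg_of_transpose_eq_neg hT, hTT,
      dotProduct_neg, neg_neg]
  have hTvv (i j : Fin t) : T *ᵥ v i ⬝ᵥ v j = 0 := by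
    rw [dotProduct_comm, hvT]
  set R : Matrix (Fin (t + t)) (Fin (t + t)) ℝ := of (Fin.append v fun i => -(T *ᵥ v i))
  have hRl (a : Fin t) : R (Fin.castAdd t a) = v a :=
    Fin.append_left v (fun i => -(T *ᵥ v i)) a
  have hRr (a : Fin t) : R (Fin.natAdd t a) = -(T *ᵥ v a) :=
    Fin.append_right v (fun i => -(T *ᵥ v i)) a
  have hRRt : R * Rᵀ = 1 := by
    ext i j
    rw [mul_transpose_apply_eq_dotProduct, one_apply]
    refine Fin.addCases (fun a => ?_) (fun a => ?_) i <;>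
      refine Fin.addCases (fun b => ?_) (fun b => ?_) j <;>
      simp only [hRl, hRr, dotProduct_neg, neg_dotProduct, neg_neg, hv, hvT, hTvv, hTvT,
        Fin.ext_iff, Fin.val_castAdd, Fin.val_natAdd, neg_zero] <;>
      split_ifs <;> first | omega | norm_num
  refine ⟨R, (mem_orthogonalGroup_iff _ _).mpr hRRt, ?_⟩
  rw [inv_eq_right_inv hRRt]
  ext i j
  rw [mul_mul_transpose_apply_eq_dotProduct, stdJ, of_apply, show (t + t) / 2 = t by omega]
  refine Fin.addCases (fun a => ?_) (fun a => ?_) i <;>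
    refine Fin.addCases (fun b => ?_) (fun b => ?_) j <;>
    simp only [hRl, hRr, mulVec_neg, hTT, neg_dotProduct, neg_neg, hv, hvT, hTvv, hTvT,
      Fin.ext_iff, Fin.val_castAdd, Fin.val_natAdd, neg_zero] <;>
    split_ifs <;> first | omega | norm_num

end Matrix

/-- An orthogonal matrix `T ∈ O(N)` with `T² = -I` can exist only for `N` even;
moreover `T` is antisymmetric and there exists `R ∈ O(N)` with `R T R⁻¹ = J`, where
`J = [[0, I], [-I, 0]]` in `(N/2) × (N/2)` blocks. -/
theorem stmt_1 (N : ℕ) (T : Matrix (Fin N) (Fin N) ℝ)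
    (hT : T ∈ Matrix.orthogonalGroup (Fin N) ℝ) (hinv : T * T = -1) :
    Even N ∧ Tᵀ = -T ∧
    ∃ R ∈ Matrix.orthogonalGroup (Fin N) ℝ, R * T * R⁻¹ = stdJ N := by
  have hskew : Tᵀ = -T := transpose_eq_neg_of_mem_orthogonalGroup hT hinv
  have heven : Even N := by simpa using even_card_of_mul_self_eq_neg_one hinv
  refine ⟨heven, hskew, ?_⟩
  obtain ⟨t, rfl⟩ := heven
  exact exists_mem_orthogonalGroup_mul_mul_inv_eq_stdJ hskew hinv
end

section
/- Let σ_1, ..., σ_n be unit vectors in R^N and r a unit vector in R^N, and suppose there exists C > 1/2 such that |⟨σ_i, σ_j⟩| ≥ C and |⟨σ_i, r⟩| ≤ √C for all i, j. Define σ_i^⊥ = σ_i − ⟨σ_i, r⟩ r and J_{ij} = ⟨σ_i^⊥, σ_j^⊥⟩ |⟨σ_i, r⟩| |⟨σ_j, r⟩|. Then the cyclic product J_{12} J_{23} ⋯ J_{n-1,n} J_{n1} is nonnegative. -/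
open scoped RealInnerProductSpace

lemma aux_real (C t s x : ℝ) (hC : 1 / 2 < C) (hab : C ≤ t) (hbc : C ≤ s)
    (ht1 : t ≤ 1) (hs1 : s ≤ 1) (hCS : (x - t * s) ^ 2 ≤ (1 - t ^ 2) * (1 - s ^ 2))
    (hac : C ≤ |x|) : C ≤ x := by
  by_contra h
  push_neg at h
  have hneg : x ≤ -C := by
    rcases abs_cases x with ⟨h1, h2⟩ | ⟨h1, h2⟩
    · rw [h1] at hac; linarith
    · rw [h1] at hac; linarith
  have hC0 : (0 : ℝ) < C := by linarith
  have hts : C * C ≤ t * s := mul_le_mul hab hbc hC0.le (by linarith)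
  have hX : C + C ^ 2 ≤ -(x - t * s) := by nlinarith
  have hX0 : (0 : ℝ) ≤ C + C ^ 2 := by nlinarith
  have hB : (C + C ^ 2) * (C + C ^ 2) ≤ (-(x - t * s)) * (-(x - t * s)) :=
    mul_le_mul hX hX hX0 (le_trans hX0 hX)
  have hA : (1 - t ^ 2) * (1 - s ^ 2) ≤ (1 - C ^ 2) * (1 - C ^ 2) := by
    have h1 : C ^ 2 ≤ t ^ 2 := by nlinarith
    have h2 : C ^ 2 ≤ s ^ 2 := by nlinarith
    have h3 : 1 - t ^ 2 ≤ 1 - C ^ 2 := by linarith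
    have h4 : 1 - s ^ 2 ≤ 1 - C ^ 2 := by linarith
    exact mul_le_mul h3 h4 (by nlinarith) (by nlinarith)
  nlinarith [hCS, hB, hA, hC]

lemma aux_trans {E : Type*} [NormedAddCommGroup E] [InnerProductSpace ℝ E]
    (a b c : E) (ha : ‖a‖ = 1) (hb : ‖b‖ = 1) (hc : ‖c‖ = 1)
    {C : ℝ} (hC : 1 / 2 < C) (hab : C ≤ ⟪a, b⟫) (hbc : C ≤ ⟪b, c⟫)
    (hac : C ≤ |⟪a, c⟫|) : C ≤ ⟪a, c⟫ := by
  have haa : ⟪a, a⟫ = 1 := by rw [real_inner_self_eq_norm_sq, ha]; norm_num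
  have hbb : ⟪b, b⟫ = 1 := by rw [real_inner_self_eq_norm_sq, hb]; norm_num
  have hcc : ⟪c, c⟫ = 1 := by rw [real_inner_self_eq_norm_sq, hc]; norm_num
  have hba : ⟪b, a⟫ = ⟪a, b⟫ := (real_inner_comm b a).symm
  have hcb : ⟪c, b⟫ = ⟪b, c⟫ := (real_inner_comm c b).symm
  have ht1 : ⟪a, b⟫ ≤ 1 := by
    have h := abs_real_inner_le_norm a b
    rw [ha, hb] at h
    exact (abs_le.mp (by simpa using h)).2
  have hs1 : ⟪b, c⟫ ≤ 1 := by
    have h := abs_real_inner_le_norm b c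
    rw [hb, hc] at h
    exact (abs_le.mp (by simpa using h)).2
  have hkey : ⟪a - ⟪a, b⟫ • b, c - ⟪b, c⟫ • b⟫ = ⟪a, c⟫ - ⟪a, b⟫ * ⟪b, c⟫ := by
    simp only [inner_sub_left, inner_sub_right, real_inner_smul_left,
      real_inner_smul_right, hbb, hba, hcb]
    ring
  have hna : ‖a - ⟪a, b⟫ • b‖ ^ 2 = 1 - ⟪a, b⟫ ^ 2 := by
    rw [← real_inner_self_eq_norm_sq]
    simp only [inner_sub_left, inner_sub_right, real_inner_smul_left,
      real_inner_smul_right, haa, hbb, hba]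
    ring
  have hnc : ‖c - ⟪b, c⟫ • b‖ ^ 2 = 1 - ⟪b, c⟫ ^ 2 := by
    rw [← real_inner_self_eq_norm_sq]
    simp only [inner_sub_left, inner_sub_right, real_inner_smul_left,
      real_inner_smul_right, hcc, hbb, hcb, real_inner_comm b c]
    ring
  have hCS : ⟪a - ⟪a, b⟫ • b, c - ⟪b, c⟫ • b⟫ ^ 2
      ≤ ‖a - ⟪a, b⟫ • b‖ ^ 2 * ‖c - ⟪b, c⟫ • b‖ ^ 2 := by
    have h := abs_real_inner_le_norm (a - ⟪a, b⟫ • b) (c - ⟪b, c⟫ • b)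
    nlinarith [norm_nonneg (a - ⟪a, b⟫ • b), norm_nonneg (c - ⟪b, c⟫ • b),
      sq_abs ⟪a - ⟪a, b⟫ • b, c - ⟪b, c⟫ • b⟫,
      abs_nonneg ⟪a - ⟪a, b⟫ • b, c - ⟪b, c⟫ • b⟫]
  rw [hna, hnc, hkey] at hCS
  exact aux_real C ⟪a, b⟫ ⟪b, c⟫ ⟪a, c⟫ hC hab hbc ht1 hs1 hCS hac

/-- Let `σ_1, …, σ_n` and `r` be unit vectors in `ℝ^N`, and suppose there is
`C > 1/2` with `|⟨σ_i, σ_j⟩| ≥ C` and `|⟨σ_i, r⟩| ≤ √C` for all `i, j`.  With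
`σ^⊥ = σ - ⟨σ,r⟩ r` and `J_{ij} = ⟨σ_i^⊥, σ_j^⊥⟩ |⟨σ_i,r⟩| |⟨σ_j,r⟩|`, the cyclic product
`J_{12} J_{23} ⋯ J_{n-1,n} J_{n,1}` is nonnegative. -/
theorem stmt_2 (N n : ℕ) [NeZero n] (σ : Fin n → EuclideanSpace ℝ (Fin N))
    (r : EuclideanSpace ℝ (Fin N)) (hσ : ∀ i, ‖σ i‖ = 1) (hr : ‖r‖ = 1)
    (C : ℝ) (hC : 1 / 2 < C)
    (hij : ∀ i j, C ≤ |⟪σ i, σ j⟫|)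
    (hir : ∀ i, |⟪σ i, r⟫| ≤ Real.sqrt C) :
    0 ≤ ∏ i : Fin n,
        (⟪σ i - ⟪σ i, r⟫ • r, σ (i + 1) - ⟪σ (i + 1), r⟫ • r⟫
          * |⟪σ i, r⟫| * |⟪σ (i + 1), r⟫|) := by
  have hC0 : (0 : ℝ) < C := by linarith
  set e : Fin n → ℝ := fun i => if 0 ≤ ⟪σ i, σ 0⟫ then 1 else -1 with he
  have he1 : ∀ i, e i = 1 ∨ e i = -1 := by
    intro i
    by_cases h : 0 ≤ ⟪σ i, σ 0⟫
    · left; simp only [he]; rw [if_pos h]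
    · right; simp only [he]; rw [if_neg h]
  have hesq : ∀ i, e i * e i = 1 := by
    intro i; rcases he1 i with h | h <;> rw [h] <;> norm_num
  -- τ i = e i • σ i satisfies ⟪τ i, σ 0⟫ ≥ C
  have htau : ∀ i, C ≤ e i * ⟪σ i, σ 0⟫ := by
    intro i
    by_cases h : 0 ≤ ⟪σ i, σ 0⟫
    · have hh := hij i 0
      rw [abs_of_nonneg h] at hh
      have hei : e i = 1 := by simp only [he]; rw [if_pos h]
      rw [hei]; linarith
    · push_neg at h
      have hh := hij i 0
      rw [abs_of_neg h] at hh
      have hei : e i = -1 := by simp only [he]; rw [if_neg (not_le.mpr h)]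
      rw [hei]; linarith
  -- sign-corrected inner products are ≥ C
  have hsig : ∀ i j, C ≤ e i * e j * ⟪σ i, σ j⟫ := by
    intro i j
    have hτi : ‖e i • σ i‖ = 1 := by
      rcases he1 i with h | h <;> simp [h, hσ i, norm_smul]
    have hτj : ‖e j • σ j‖ = 1 := by
      rcases he1 j with h | h <;> simp [h, hσ j, norm_smul]
    have h1 : C ≤ ⟪e i • σ i, σ 0⟫ := by
      rw [real_inner_smul_left]; exact htau i
    have h2 : C ≤ ⟪σ 0, e j • σ j⟫ := by
      rw [real_inner_smul_right, real_inner_comm]; exact htau j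
    have h3 : ⟪e i • σ i, e j • σ j⟫ = e i * e j * ⟪σ i, σ j⟫ := by
      rw [real_inner_smul_left, real_inner_smul_right]; ring
    have h4 : C ≤ |⟪e i • σ i, e j • σ j⟫| := by
      rw [h3, abs_mul]
      have : |e i * e j| = 1 := by
        rcases he1 i with h | h <;> rcases he1 j with h' | h' <;>
          simp [h, h', abs_mul]
      rw [this, one_mul]
      exact hij i j
    have := aux_trans (e i • σ i) (σ 0) (e j • σ j) hτi (hσ 0) hτj hC h1 h2 h4
    rwa [h3] at this
  -- bound on products of inner products with r
  have hrr : ∀ i j, |⟪σ i, r⟫ * ⟪σ j, r⟫| ≤ C := by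
    intro i j
    rw [abs_mul]
    calc |⟪σ i, r⟫| * |⟪σ j, r⟫| ≤ Real.sqrt C * Real.sqrt C :=
          mul_le_mul (hir i) (hir j) (abs_nonneg _) (Real.sqrt_nonneg _)
      _ = C := Real.mul_self_sqrt hC0.le
  -- perp inner product
  have hperp : ∀ i j, ⟪σ i - ⟪σ i, r⟫ • r, σ j - ⟪σ j, r⟫ • r⟫
      = ⟪σ i, σ j⟫ - ⟪σ i, r⟫ * ⟪σ j, r⟫ := by
    intro i j
    have hrr1 : ⟪r, r⟫ = 1 := by rw [real_inner_self_eq_norm_sq, hr]; norm_num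
    simp only [inner_sub_left, inner_sub_right, real_inner_smul_left,
      real_inner_smul_right, hrr1, real_inner_comm r (σ j)]
    ring
  set f : Fin n → ℝ := fun i =>
    ⟪σ i - ⟪σ i, r⟫ • r, σ (i + 1) - ⟪σ (i + 1), r⟫ • r⟫
      * |⟪σ i, r⟫| * |⟪σ (i + 1), r⟫| with hf
  have hfact : ∀ i : Fin n, 0 ≤ e i * e (i + 1) * f i := by
    intro i
    have key : 0 ≤ e i * e (i + 1) *
        ⟪σ i - ⟪σ i, r⟫ • r, σ (i + 1) - ⟪σ (i + 1), r⟫ • r⟫ := by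
      rw [hperp]
      have h1 := hsig i (i + 1)
      have h2 := hrr i (i + 1)
      have hee : |e i * e (i + 1)| = 1 := by
        rcases he1 i with h | h <;> rcases he1 (i + 1) with h' | h' <;>
          simp [h, h', abs_mul]
      have h3 : |e i * e (i + 1) * (⟪σ i, r⟫ * ⟪σ (i + 1), r⟫)| ≤ C := by
        rw [abs_mul, hee, one_mul]; exact h2
      have h4 := neg_abs_le (e i * e (i + 1) * (⟪σ i, r⟫ * ⟪σ (i + 1), r⟫))
      have h5 := abs_le.mp h3
      have : e i * e (i + 1) * (⟪σ i, σ (i + 1)⟫ - ⟪σ i, r⟫ * ⟪σ (i + 1), r⟫)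
          = e i * e (i + 1) * ⟪σ i, σ (i + 1)⟫
            - e i * e (i + 1) * (⟪σ i, r⟫ * ⟪σ (i + 1), r⟫) := by ring
      rw [this]
      linarith [h5.2]
    have : e i * e (i + 1) * f i =
        (e i * e (i + 1) *
          ⟪σ i - ⟪σ i, r⟫ • r, σ (i + 1) - ⟪σ (i + 1), r⟫ • r⟫)
          * |⟪σ i, r⟫| * |⟪σ (i + 1), r⟫| := by rw [hf]; ring
    rw [this]
    exact mul_nonneg (mul_nonneg key (abs_nonneg _)) (abs_nonneg _)
  have hshift : ∏ i : Fin n, e (i + 1) = ∏ i : Fin n, e i :=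
    Fintype.prod_equiv (Equiv.addRight (1 : Fin n)) _ _ (fun i => rfl)
  have hsplit : ∏ i : Fin n, (e i * e (i + 1) * f i)
      = ((∏ i : Fin n, e i) * (∏ i : Fin n, e (i + 1))) * ∏ i : Fin n, f i := by
    rw [← Finset.prod_mul_distrib, ← Finset.prod_mul_distrib]
  have hone : (∏ i : Fin n, e i) * (∏ i : Fin n, e (i + 1)) = 1 := by
    rw [hshift, ← Finset.prod_mul_distrib]
    simp only [hesq]
    exact Finset.prod_const_one
  have hprod : 0 ≤ ∏ i : Fin n, (e i * e (i + 1) * f i) :=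
    Finset.prod_nonneg (fun i _ => hfact i)
  rw [hsplit, hone, one_mul] at hprod
  exact hprod
end

section
/- Let σ_x, σ_y, r be unit vectors in R^N and suppose there exists ε ≥ 0 such that |⟨σ_x, σ_y⟩| ≥ 1−ε and √ε < |⟨σ_x, r⟩|, |⟨σ_y, r⟩| < √(1−ε). Then, writing σ^⊥ = σ − ⟨σ, r⟩ r, one has ⟨σ_x^⊥, σ_y^⊥⟩ ⟨σ_x, r⟩ ⟨σ_y, r⟩ > 0. -/
open scoped RealInnerProductSpace

set_option maxHeartbeats 800000

/-- Let `σ_x, σ_y, r` be unit vectors in `ℝ^N` and suppose there is `ε ≥ 0`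
with `|⟨σ_x, σ_y⟩| ≥ 1 - ε` and `√ε < |⟨σ_x, r⟩|, |⟨σ_y, r⟩| < √(1-ε)`.  Then, writing
`σ^⊥ = σ - ⟨σ,r⟩ r`, one has `⟨σ_x^⊥, σ_y^⊥⟩ ⟨σ_x, r⟩ ⟨σ_y, r⟩ > 0`. -/
theorem stmt_3 (N : ℕ) (σx σy r : EuclideanSpace ℝ (Fin N))
    (hx : ‖σx‖ = 1) (hy : ‖σy‖ = 1) (hr : ‖r‖ = 1)
    (ε : ℝ) (hε : 0 ≤ ε) (hxy : 1 - ε ≤ |⟪σx, σy⟫|)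
    (hx1 : Real.sqrt ε < |⟪σx, r⟫|) (hx2 : |⟪σx, r⟫| < Real.sqrt (1 - ε))
    (hy1 : Real.sqrt ε < |⟪σy, r⟫|) (hy2 : |⟪σy, r⟫| < Real.sqrt (1 - ε)) :
    0 < ⟪σx - ⟪σx, r⟫ • r, σy - ⟪σy, r⟫ • r⟫ * ⟪σx, r⟫ * ⟪σy, r⟫ := by
  set a := ⟪σx, r⟫ with hadef
  set b := ⟪σy, r⟫ with hbdef
  set c := ⟪σx, σy⟫ with hcdef
  have hrr : ⟪r, r⟫ = (1:ℝ) := by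
    rw [real_inner_self_eq_norm_sq, hr]; norm_num
  have hxx : ⟪σx, σx⟫ = (1:ℝ) := by
    rw [real_inner_self_eq_norm_sq, hx]; norm_num
  have hyy : ⟪σy, σy⟫ = (1:ℝ) := by
    rw [real_inner_self_eq_norm_sq, hy]; norm_num
  have hra : ⟪r, σx⟫ = a := (real_inner_comm r σx).symm
  have hrb : ⟪r, σy⟫ = b := (real_inner_comm r σy).symm
  have key : ⟪σx - a • r, σy - b • r⟫ = c - a * b := by
    simp only [inner_sub_left, inner_sub_right, real_inner_smul_left, real_inner_smul_right,
      hrr, hra, hrb, ← hadef, ← hbdef, ← hcdef]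
    ring
  have nx : ⟪σx - a • r, σx - a • r⟫ = 1 - a ^ 2 := by
    simp only [inner_sub_left, inner_sub_right, real_inner_smul_left, real_inner_smul_right,
      hrr, hxx, hra, ← hadef]
    ring
  have ny : ⟪σy - b • r, σy - b • r⟫ = 1 - b ^ 2 := by
    simp only [inner_sub_left, inner_sub_right, real_inner_smul_left, real_inner_smul_right,
      hrr, hyy, hrb, ← hbdef]
    ring
  have hcs := real_inner_mul_inner_self_le (σx - a • r) (σy - b • r)
  rw [key, nx, ny] at hcs
  have h1ε : 0 < 1 - ε := by
    by_contra h
    push_neg at h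
    rw [Real.sqrt_eq_zero_of_nonpos h] at hx2
    exact absurd hx2 (not_lt.2 (abs_nonneg _))
  have ha2 : ε < a ^ 2 := by
    calc ε = Real.sqrt ε ^ 2 := (Real.sq_sqrt hε).symm
    _ < |a| ^ 2 := by exact pow_lt_pow_left₀ hx1 (Real.sqrt_nonneg _) two_ne_zero
    _ = a ^ 2 := sq_abs a
  have hb2 : ε < b ^ 2 := by
    calc ε = Real.sqrt ε ^ 2 := (Real.sq_sqrt hε).symm
    _ < |b| ^ 2 := by exact pow_lt_pow_left₀ hy1 (Real.sqrt_nonneg _) two_ne_zero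
    _ = b ^ 2 := sq_abs b
  have ha2' : a ^ 2 < 1 - ε := by
    calc a ^ 2 = |a| ^ 2 := (sq_abs a).symm
    _ < Real.sqrt (1 - ε) ^ 2 := by exact pow_lt_pow_left₀ hx2 (abs_nonneg _) two_ne_zero
    _ = 1 - ε := Real.sq_sqrt h1ε.le
  have hb2' : b ^ 2 < 1 - ε := by
    calc b ^ 2 = |b| ^ 2 := (sq_abs b).symm
    _ < Real.sqrt (1 - ε) ^ 2 := by exact pow_lt_pow_left₀ hy2 (abs_nonneg _) two_ne_zero
    _ = 1 - ε := Real.sq_sqrt h1ε.le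
  have hab : |a * b| < 1 - ε := by
    rw [abs_mul]
    nlinarith [abs_nonneg a, abs_nonneg b, sq_abs a, sq_abs b]
  have habne : a * b ≠ 0 := by
    intro h
    rcases mul_eq_zero.1 h with h' | h'
    · rw [h', abs_zero] at hx1; exact absurd hx1 (not_lt.2 (Real.sqrt_nonneg _))
    · rw [h', abs_zero] at hy1; exact absurd hy1 (not_lt.2 (Real.sqrt_nonneg _))
  rw [key, mul_assoc]
  rcases abs_cases c with ⟨hc1, hc2⟩ | ⟨hc1, hc2⟩
  · have hc : 1 - ε ≤ c := hc1 ▸ hxy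
    rcases lt_trichotomy (a * b) 0 with hd | hd | hd
    · exfalso
      have habs : |a * b| = -(a * b) := abs_of_neg hd
      rw [habs] at hab
      nlinarith [hcs, ha2, hb2, sq_nonneg ε, mul_pos h1ε (neg_pos.2 hd),
        mul_nonneg (by linarith : (0:ℝ) ≤ c - (1 - ε))
          (by linarith : (0:ℝ) ≤ c + (1 - ε) - 2 * (a * b))]
    · exact absurd hd habne
    · apply mul_pos _ hd
      have h2 : a * b ≤ |a * b| := le_abs_self _
      linarith
  · have hc : c ≤ -(1 - ε) := by
      have := hc1 ▸ hxy; linarith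
    rcases lt_trichotomy (a * b) 0 with hd | hd | hd
    · apply mul_pos_of_neg_of_neg _ hd
      have h2 : -(a * b) ≤ |a * b| := neg_le_abs _
      linarith
    · exact absurd hd habne
    · exfalso
      have habs : |a * b| = a * b := abs_of_pos hd
      rw [habs] at hab
      nlinarith [hcs, ha2, hb2, sq_nonneg ε, mul_pos h1ε hd,
        mul_nonneg (by linarith : (0:ℝ) ≤ -c - (1 - ε))
          (by linarith : (0:ℝ) ≤ -c + (1 - ε) + 2 * (a * b))]
end

section
/- Let U, V ∈ SU(N). The map A ↦ U Ā V on SU(N) (where Ā is entrywise complex conjugation) is involutive if and only if either (1) U = U^T and V = V^T, or (2) U = −U^T, V = −V^T, and N is even. -/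
/-!
Applying `A ↦ U Ā V` twice gives `A ↦ (U Ū) A (V̄ V)`. If this is the identity on `SU(N)`, then
`A = 1` gives `V̄ V = (U Ū)⁻¹`, so `U Ū` commutes with `SU(N)` and is a scalar `μ`. For unitary
`U`, `U Ū = μ` means `Ū = μ U⋆`, i.e. `U = μ̄ Uᵀ`; transposing twice forces `μ̄² = 1`, and
`V̄ V = μ` gives `V = μ̄ Vᵀ` with the same sign. For the sign `-1`, taking determinants in
`U = -Uᵀ` gives `(-1)ᴺ = 1`. Conversely, `U = ε Uᵀ` and `V = ε Vᵀ` with `ε = ±1` give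
`U Ū = V̄ V = ε`.
-/

open Matrix ComplexConjugate

namespace Matrix

variable {n : Type*}

section Twist

variable [Fintype n]

def twistedConj (U V A : Matrix n n ℂ) : Matrix n n ℂ := U * A.map conj * V

lemma twistedConj_twistedConj (U V A : Matrix n n ℂ) :
    twistedConj U V (twistedConj U V A) = U * U.map conj * A * (V.map conj * V) := by
  simp only [twistedConj, Matrix.map_mul, map_map]
  simp only [Function.comp_def, Complex.conj_conj, map_id']
  noncomm_ring

end Twist

section Center

variable [Fintype n] [DecidableEq n]

lemma diagonal_mem_unitaryGroup {d : n → ℂ} (hd : ∀ k, conj (d k) * d k = 1) :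
    diagonal d ∈ unitaryGroup n ℂ := by
  rw [mem_unitaryGroup_iff', star_eq_conjTranspose, diagonal_conjTranspose,
    diagonal_mul_diagonal, ← diagonal_one]
  exact congrArg diagonal (funext hd)

lemma permMatrix_mem_unitaryGroup (σ : Equiv.Perm n) : σ.permMatrix ℂ ∈ unitaryGroup n ℂ := by
  rw [mem_unitaryGroup_iff', star_eq_conjTranspose, conjTranspose_permMatrix, ← permMatrix_mul,
    mul_inv_cancel, permMatrix_one]

lemma diagonal_I_negI_mem_specialUnitaryGroup (i j : n) :
    diagonal (fun k => (if k = i then Complex.I else 1) * (if k = j then -Complex.I else 1))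
      ∈ specialUnitaryGroup n ℂ := by
  refine mem_specialUnitaryGroup_iff.mpr ⟨diagonal_mem_unitaryGroup fun k => ?_, ?_⟩
  · simp only [map_mul]
    split_ifs <;> simp
  · rw [det_diagonal, Finset.prod_mul_distrib, Finset.prod_ite_eq', Finset.prod_ite_eq']
    simp

lemma swap_mul_diagonal_mem_specialUnitaryGroup {i j : n} (hij : i ≠ j) :
    (Equiv.swap i j).permMatrix ℂ * diagonal (fun k => if k = i then -1 else 1)
      ∈ specialUnitaryGroup n ℂ := by
  refine mem_specialUnitaryGroup_iff.mpr ⟨Submonoid.mul_mem _ (permMatrix_mem_unitaryGroup _)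
    (diagonal_mem_unitaryGroup fun k => ?_), ?_⟩
  · split_ifs <;> simp
  · rw [det_mul, det_permutation, det_diagonal, Finset.prod_ite_eq', Equiv.Perm.sign_swap hij]
    simp

variable {C : Matrix n n ℂ}

lemma apply_eq_zero_of_forall_commute (h : ∀ A ∈ specialUnitaryGroup n ℂ, Commute C A)
    {i j : n} (hij : i ≠ j) : C i j = 0 := by
  have hentry := congrFun (congrFun (h _ (diagonal_I_negI_mem_specialUnitaryGroup i j)).eq i) j
  simp only [mul_diagonal, diagonal_mul, if_neg hij, if_neg hij.symm, if_true, one_mul,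
    mul_one] at hentry
  have : C i j * (2 * Complex.I) = 0 := by linear_combination -hentry
  simpa [Complex.I_ne_zero] using this

lemma apply_self_eq_of_forall_commute (h : ∀ A ∈ specialUnitaryGroup n ℂ, Commute C A)
    (i j : n) : C i i = C j j := by
  obtain rfl | hij := eq_or_ne i j
  · rfl
  have hentry := congrFun (congrFun (h _ (swap_mul_diagonal_mem_specialUnitaryGroup hij)).eq i) j
  rw [← mul_assoc, PEquiv.mul_toMatrix_toPEquiv, mul_assoc, PEquiv.toMatrix_toPEquiv_mul] at hentry
  simpa [diagonal_mul, hij.symm] using hentry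

lemma exists_eq_smul_one_of_forall_commute (h : ∀ A ∈ specialUnitaryGroup n ℂ, Commute C A) :
    ∃ μ : ℂ, C = μ • 1 := by
  cases isEmpty_or_nonempty n
  · exact ⟨0, Subsingleton.elim _ _⟩
  obtain ⟨i⟩ := ‹Nonempty n›
  refine ⟨C i i, ext fun j k => ?_⟩
  obtain rfl | hjk := eq_or_ne j k
  · simpa using apply_self_eq_of_forall_commute h j i
  · simpa [hjk] using apply_eq_zero_of_forall_commute h hjk

end Center

section Transpose

variable {α : Type*} [CommRing α] {U : Matrix n n α}

lemma mul_self_eq_one_of_eq_smul_transpose [NoZeroDivisors α] {ν : α} (hU : U ≠ 0)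
    (h : U = ν • Uᵀ) : ν * ν = 1 := by
  have hT : Uᵀ = ν • U := by
    conv_lhs => rw [h]
    rw [transpose_smul, transpose_transpose]
  have hUU : (ν * ν - 1) • U = 0 := by
    rw [sub_smul, mul_smul, ← hT, ← h, one_smul, sub_self]
  -- `Matrix` does not inherit the torsion-freeness instance of the function type.
  exact sub_eq_zero.mp (((smul_eq_zero (M := n → n → α)).mp hUU).resolve_right hU)

lemma even_card_of_eq_neg_transpose [Fintype n] [DecidableEq n] (h1 : (-1 : α) ≠ 1)
    (hdet : IsUnit U.det) (h : U = -Uᵀ) : Even (Fintype.card n) := by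
  have hdet' := congrArg det h
  rw [det_neg, det_transpose] at hdet'
  exact (neg_one_pow_eq_one_iff_even h1).mp (hdet.mul_eq_right.mp hdet'.symm)

end Transpose

section Unitary

variable [Fintype n] [DecidableEq n] {α : Type*} [CommRing α] [StarRing α]
  {U X : Matrix n n α} {μ : α}

lemma mul_eq_smul_one_iff_eq_smul_star (hU : U ∈ unitaryGroup n α) :
    U * X = μ • 1 ↔ X = μ • star U := by
  constructor
  · intro h
    rw [← one_mul X, ← mem_unitaryGroup_iff'.mp hU, mul_assoc, h, mul_smul_comm, mul_one]
  · rintro rfl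
    rw [mul_smul_comm, mem_unitaryGroup_iff.mp hU]

lemma mul_eq_smul_one_iff_eq_smul_star' (hU : U ∈ unitaryGroup n α) :
    X * U = μ • 1 ↔ X = μ • star U := by
  constructor
  · intro h
    rw [← mul_one X, ← mem_unitaryGroup_iff.mp hU, ← mul_assoc, h, smul_mul_assoc, one_mul]
  · rintro rfl
    rw [smul_mul_assoc, mem_unitaryGroup_iff'.mp hU]

end Unitary

section Conj

variable {U : Matrix n n ℂ} {μ : ℂ}

lemma map_conj_eq_smul_star_iff : U.map conj = μ • star U ↔ U = conj μ • Uᵀ := by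
  have h : (conj μ • Uᵀ).map conj = μ • star U := by ext i j; simp
  rw [← h, (map_injective (starRingEnd ℂ).injective).eq_iff]

variable [Fintype n] [DecidableEq n]

lemma mul_map_conj_eq_smul_one_iff (hU : U ∈ unitaryGroup n ℂ) :
    U * U.map conj = μ • 1 ↔ U = conj μ • Uᵀ :=
  (mul_eq_smul_one_iff_eq_smul_star hU).trans map_conj_eq_smul_star_iff

lemma map_conj_mul_eq_smul_one_iff (hU : U ∈ unitaryGroup n ℂ) :
    U.map conj * U = μ • 1 ↔ U = conj μ • Uᵀ :=
  (mul_eq_smul_one_iff_eq_smul_star' hU).trans map_conj_eq_smul_star_iff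

end Conj

section Involution

variable [Fintype n] [DecidableEq n] {U V : Matrix n n ℂ}

lemma forall_twistedConj_twistedConj_eq_iff [Nonempty n] (hU : U ∈ specialUnitaryGroup n ℂ)
    (hV : V ∈ specialUnitaryGroup n ℂ) :
    (∀ A ∈ specialUnitaryGroup n ℂ, twistedConj U V (twistedConj U V A) = A) ↔
      ∃ ν : ℂ, ν * ν = 1 ∧ U = ν • Uᵀ ∧ V = ν • Vᵀ := by
  simp only [twistedConj_twistedConj]
  constructor
  · intro h
    have hCD : U * U.map conj * (V.map conj * V) = 1 := by simpa using h 1 (one_mem _)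
    obtain ⟨μ, hC⟩ := exists_eq_smul_one_of_forall_commute fun A hA =>
      calc U * U.map conj * A = U * U.map conj * A * (V.map conj * V) * (U * U.map conj) := by
            rw [mul_assoc _ (V.map conj * V), mul_eq_one_comm.mp hCD, mul_one]
        _ = A * (U * U.map conj) := by rw [h A hA]
    have hU0 : U ≠ 0 := by
      rintro rfl
      simpa using (mem_specialUnitaryGroup_iff.mp hU).2
    have hUμ := (mul_map_conj_eq_smul_one_iff hU.1).mp hC
    have hμ : conj μ * conj μ = 1 := mul_self_eq_one_of_eq_smul_transpose hU0 hUμ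
    have hD : V.map conj * V = μ • 1 := by
      rw [hC, smul_mul_assoc, one_mul] at hCD
      have hμ' : μ * μ = 1 := by simpa using congrArg conj hμ
      rw [← one_smul ℂ (V.map conj * V), ← hμ', mul_smul, hCD]
    exact ⟨conj μ, hμ, hUμ, (map_conj_mul_eq_smul_one_iff hV.1).mp hD⟩
  · rintro ⟨ν, hν, hUν, hVν⟩ A -
    rw [(mul_map_conj_eq_smul_one_iff (μ := conj ν) hU.1).mpr (by rwa [Complex.conj_conj]),
      (map_conj_mul_eq_smul_one_iff (μ := conj ν) hV.1).mpr (by rwa [Complex.conj_conj])]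
    simp [smul_smul, ← map_mul, hν]

end Involution

end Matrix

/-- For `U, V ∈ SU(N)`, the isometry `A ↦ U Ā V` of `SU(N)` (with `Ā` the
entrywise complex conjugate) is involutive if and only if either (1) `U = Uᵀ` and `V = Vᵀ`,
or (2) `U = -Uᵀ`, `V = -Vᵀ`, and `N` is even. -/
theorem stmt_12 (N : ℕ) (U V : Matrix (Fin N) (Fin N) ℂ)
    (hU : U ∈ Matrix.specialUnitaryGroup (Fin N) ℂ)
    (hV : V ∈ Matrix.specialUnitaryGroup (Fin N) ℂ) :
    (∀ A ∈ Matrix.specialUnitaryGroup (Fin N) ℂ,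
        U * ((U * A.map (starRingEnd ℂ) * V).map (starRingEnd ℂ)) * V = A) ↔
      ((U = Uᵀ ∧ V = Vᵀ) ∨ (U = -Uᵀ ∧ V = -Vᵀ ∧ Even N)) := by
  change (∀ A ∈ _, twistedConj U V (twistedConj U V A) = A) ↔ _
  rcases isEmpty_or_nonempty (Fin N) with _ | _
  · exact iff_of_true (fun _ _ => Subsingleton.elim _ _)
      (.inl ⟨Subsingleton.elim _ _, Subsingleton.elim _ _⟩)
  rw [forall_twistedConj_twistedConj_eq_iff hU hV]
  constructor
  · rintro ⟨ν, hν, hUν, hVν⟩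
    rcases mul_self_eq_one_iff.mp hν with rfl | rfl
    · exact .inl ⟨by simpa using hUν, by simpa using hVν⟩
    · have hUT : U = -Uᵀ := by simpa using hUν
      refine .inr ⟨hUT, by simpa using hVν, ?_⟩
      simpa using even_card_of_eq_neg_transpose (by norm_num)
        (by simp [(mem_specialUnitaryGroup_iff.mp hU).2]) hUT
  · rintro (⟨hUT, hVT⟩ | ⟨hUT, hVT, -⟩)
    · exact ⟨1, one_mul 1, by rwa [one_smul], by rwa [one_smul]⟩
    · exact ⟨-1, by norm_num, by rwa [neg_one_smul], by rwa [neg_one_smul]⟩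
end

section
/- Let N be even and U ∈ U(N) an antisymmetric unitary matrix (U = −U^T). Then there exists X ∈ U(N) such that U = X J X^T, where J is the block-diagonal matrix with N/2 blocks equal to [[0,1],[-1,0]]. -/
open Matrix

/-- The block-diagonal matrix `J = blockdiag(J₂, …, J₂)` with `J₂ = [[0,1],[-1,0]]`,
viewed as an `N × N` complex matrix (for `N` even there are `N/2` blocks). -/
def blockJ (N : ℕ) : Matrix (Fin N) (Fin N) ℂ :=
  Matrix.of fun i j : Fin N =>
    if (i : ℕ) % 2 = 0 ∧ (j : ℕ) = (i : ℕ) + 1 then (1 : ℂ)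
    else if (i : ℕ) % 2 = 1 ∧ (i : ℕ) = (j : ℕ) + 1 then -1 else 0

/-!
The map `T v = U v̄` satisfies `⟪T x, T y⟫ = ⟪y, x⟫` because `U` is unitary, and `T² = -1`
because `U Ū = -U Uᴴ = -1` by antisymmetry. Consequently `⟪x, T y⟫ = -⟪y, T x⟫`, so
`⟪v, T v⟫ = 0` for all `v`. One then picks unit vectors `e₁, …, e_{N/2}` one at a time, each
orthogonal to all previous `eₚ` and `T eₚ`; the vectors `eₚ, -T eₚ` form an orthonormal basis
on which `T` acts by `J`. For the unitary `X` with these columns this reads `U X̄ = X J`,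
i.e. `U = X J Xᵀ`.
-/

open Module Submodule
open scoped InnerProductSpace Kronecker

theorem exists_norm_eq_one_forall_inner_eq_zero {𝕜 E κ : Type*} [RCLike 𝕜]
    [NormedAddCommGroup E] [InnerProductSpace 𝕜 E] [FiniteDimensional 𝕜 E] [Fintype κ]
    (v : κ → E) (hv : Fintype.card κ < finrank 𝕜 E) :
    ∃ u : E, ‖u‖ = 1 ∧ ∀ a, ⟪v a, u⟫_𝕜 = 0 := by
  have hK : span 𝕜 (Set.range v) ≠ ⊤ := fun hK => by
    have := finrank_range_le_card (R := 𝕜) v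
    rw [Set.finrank, hK, finrank_top] at this
    omega
  obtain ⟨w, hwK, hw⟩ := exists_mem_ne_zero_of_ne_bot (mt orthogonal_eq_bot_iff.mp hK)
  exact ⟨(‖w‖⁻¹ : 𝕜) • w, norm_smul_inv_norm hw, fun a =>
    inner_right_of_mem_orthogonal (subset_span (Set.mem_range_self a)) (smul_mem _ _ hwK)⟩

section QuaternionicStructure

variable {E : Type*} [NormedAddCommGroup E] [InnerProductSpace ℂ E] {T : E → E}

theorem inner_apply_antisymm (hT : ∀ x y, ⟪T x, T y⟫_ℂ = ⟪y, x⟫_ℂ) (hTT : ∀ x, T (T x) = -x)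
    (x y : E) : ⟪x, T y⟫_ℂ = -⟪y, T x⟫_ℂ := by
  rw [← hT, hTT, inner_neg_left]

theorem inner_apply_self_eq_zero (hT : ∀ x y, ⟪T x, T y⟫_ℂ = ⟪y, x⟫_ℂ)
    (hTT : ∀ x, T (T x) = -x) (x : E) : ⟪x, T x⟫_ℂ = 0 := by
  have := inner_apply_antisymm hT hTT x x
  linear_combination this / 2

theorem exists_orthonormal_forall_inner_apply_eq_zero [FiniteDimensional ℂ E]
    (hT : ∀ x y, ⟪T x, T y⟫_ℂ = ⟪y, x⟫_ℂ) (hTT : ∀ x, T (T x) = -x) :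
    ∀ k, 2 * k ≤ finrank ℂ E →
      ∃ e : Fin k → E, Orthonormal ℂ e ∧ ∀ p q, ⟪e p, T (e q)⟫_ℂ = 0
  | 0, _ => ⟨Fin.elim0, ⟨fun p => p.elim0, fun p => p.elim0⟩, fun p => p.elim0⟩
  | k + 1, hk => by
    obtain ⟨e, he, heT⟩ := exists_orthonormal_forall_inner_apply_eq_zero hT hTT k (by omega)
    obtain ⟨u, hu, hu_perp⟩ := exists_norm_eq_one_forall_inner_eq_zero (𝕜 := ℂ)
      (Sum.elim e (T ∘ e)) (by simp only [Fintype.card_sum, Fintype.card_fin]; omega)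
    have heu (p : Fin k) : ⟪e p, u⟫_ℂ = 0 := hu_perp (.inl p)
    have hue (p : Fin k) : ⟪u, e p⟫_ℂ = 0 := inner_eq_zero_symm.mp (heu p)
    have huTe (p : Fin k) : ⟪u, T (e p)⟫_ℂ = 0 := inner_eq_zero_symm.mp (hu_perp (.inr p))
    have heTu (p : Fin k) : ⟪e p, T u⟫_ℂ = 0 := by
      rw [inner_apply_antisymm hT hTT, huTe, neg_zero]
    refine ⟨Fin.snoc e u, ?_, ?_⟩
    · rw [orthonormal_iff_ite] at he ⊢
      simp [Fin.forall_fin_succ', he, heu, hue, hu, (Fin.castSucc_ne_last _).symm]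
    · simp [Fin.forall_fin_succ', heT, huTe, heTu, inner_apply_self_eq_zero hT hTT]

theorem orthonormal_pairs_neg_apply (hT : ∀ x y, ⟪T x, T y⟫_ℂ = ⟪y, x⟫_ℂ) {m : ℕ}
    {e : Fin m → E} (he : Orthonormal ℂ e) (heT : ∀ p q, ⟪e p, T (e q)⟫_ℂ = 0) :
    Orthonormal ℂ fun a : Fin m × Fin 2 => ![e a.1, -T (e a.1)] a.2 := by
  have hTe (p q : Fin m) : ⟪T (e p), e q⟫_ℂ = 0 := inner_eq_zero_symm.mp (heT q p)
  rw [orthonormal_iff_ite] at he ⊢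
  rintro ⟨p, i⟩ ⟨q, j⟩
  fin_cases i <;> fin_cases j <;> simp [he, heT, hTe, hT, eq_comm]

end QuaternionicStructure

namespace Matrix

variable {ι : Type*} [Fintype ι]

theorem eq_mul_mul_transpose_of_mul_map_star_eq [DecidableEq ι] {U X J : Matrix ι ι ℂ}
    (hX : X ∈ unitaryGroup ι ℂ) (h : U * X.map star = X * J) : U = X * J * Xᵀ := by
  have hX' : X.map star * Xᵀ = 1 := by
    have := congrArg transpose (mem_unitaryGroup_iff.mp hX)
    rwa [transpose_mul, transpose_one] at this
  rw [← h, Matrix.mul_assoc, hX', Matrix.mul_one]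

theorem of_mem_unitaryGroup_of_orthonormal [DecidableEq ι] {v : ι → EuclideanSpace ℂ ι}
    (hv : Orthonormal ℂ v) : (of fun i j => v j i) ∈ unitaryGroup ι ℂ := by
  rw [mem_unitaryGroup_iff']
  ext i j
  rw [orthonormal_iff_ite] at hv
  simpa [mul_apply, EuclideanSpace.inner_eq_star_dotProduct, dotProduct, mul_comm, one_apply]
    using hv i j

def mulVecStar (U : Matrix ι ι ℂ) (v : EuclideanSpace ℂ ι) : EuclideanSpace ℂ ι :=
  WithLp.toLp 2 (U *ᵥ star (WithLp.ofLp v))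

variable {U : Matrix ι ι ℂ}

theorem mulVecStar_neg (v : EuclideanSpace ℂ ι) : U.mulVecStar (-v) = -U.mulVecStar v := by
  simp [mulVecStar, mulVec_neg]

theorem inner_mulVecStar_mulVecStar [DecidableEq ι] (hU : U ∈ unitaryGroup ι ℂ)
    (x y : EuclideanSpace ℂ ι) : ⟪U.mulVecStar x, U.mulVecStar y⟫_ℂ = ⟪y, x⟫_ℂ := by
  simp only [mulVecStar, EuclideanSpace.inner_eq_star_dotProduct, star_mulVec, star_star]
  rw [dotProduct_comm, ← dotProduct_mulVec, mulVec_mulVec, ← star_eq_conjTranspose,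
    mem_unitaryGroup_iff'.mp hU, one_mulVec]

theorem mulVecStar_mulVecStar [DecidableEq ι] (hU : U ∈ unitaryGroup ι ℂ) (hanti : U = -Uᵀ)
    (v : EuclideanSpace ℂ ι) : U.mulVecStar (U.mulVecStar v) = -v := by
  have hUU : U * Uᴴᵀ = -1 := by
    rw [← conjTranspose_transpose_eq_transpose_conjTranspose, ← neg_eq_iff_eq_neg.mpr hanti,
      conjTranspose_neg, mul_neg, ← star_eq_conjTranspose, mem_unitaryGroup_iff.mp hU]
  simp only [mulVecStar, WithLp.ofLp_toLp, star_mulVec, star_star]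
  rw [← mulVec_transpose, mulVec_mulVec, hUU, neg_mulVec, one_mulVec]
  rfl

def symplecticJ (m : ℕ) : Matrix (Fin m × Fin 2) (Fin m × Fin 2) ℂ :=
  (1 : Matrix (Fin m) (Fin m) ℂ) ⊗ₖ !![0, 1; -1, 0]

variable {m : ℕ}

theorem mul_map_star_eq_mul_submatrix_symplecticJ (f : ι ≃ Fin m × Fin 2)
    (c : Fin m × Fin 2 → EuclideanSpace ℂ ι) (h0 : ∀ p, U.mulVecStar (c (p, 0)) = -c (p, 1))
    (h1 : ∀ p, U.mulVecStar (c (p, 1)) = c (p, 0)) :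
    U * (of fun i a => c (f a) i).map star =
      (of fun i a => c (f a) i) * (symplecticJ m).submatrix f f := by
  ext i a
  change U.mulVecStar (c (f a)) i = ∑ b, c (f b) i * symplecticJ m (f b) (f a)
  rw [Equiv.sum_comp f (fun β => c β i * symplecticJ m β (f a))]
  obtain ⟨p, l⟩ := f a
  fin_cases l <;> simp [symplecticJ, Fintype.sum_prod_type, one_apply, h0, h1]

theorem exists_mem_unitaryGroup_eq_mul_symplecticJ_mul_transpose [DecidableEq ι]
    (f : ι ≃ Fin m × Fin 2) (hU : U ∈ unitaryGroup ι ℂ) (hanti : U = -Uᵀ) :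
    ∃ X ∈ unitaryGroup ι ℂ, U = X * (symplecticJ m).submatrix f f * Xᵀ := by
  obtain ⟨e, he, heT⟩ := exists_orthonormal_forall_inner_apply_eq_zero
    (inner_mulVecStar_mulVecStar hU) (mulVecStar_mulVecStar hU hanti) m
    (by simp [Fintype.card_congr f, mul_comm])
  set c := fun a : Fin m × Fin 2 => ![e a.1, -U.mulVecStar (e a.1)] a.2
  have hX := of_mem_unitaryGroup_of_orthonormal
    ((orthonormal_pairs_neg_apply (inner_mulVecStar_mulVecStar hU) he heT).comp f f.injective)
  refine ⟨_, hX, eq_mul_mul_transpose_of_mul_map_star_eq hX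
    (mul_map_star_eq_mul_submatrix_symplecticJ f c (fun p => ?_) (fun p => ?_))⟩
  · simp [c]
  · simp [c, mulVecStar_neg, mulVecStar_mulVecStar hU hanti]

end Matrix

-- `finProdFinEquiv (p, k) = k + 2 * p`: position `k` in the `p`-th block.
theorem blockJ_eq_submatrix_symplecticJ (m : ℕ) :
    blockJ (m * 2) =
      (Matrix.symplecticJ m).submatrix finProdFinEquiv.symm finProdFinEquiv.symm := by
  ext i j
  obtain ⟨⟨p, k⟩, rfl⟩ := finProdFinEquiv.surjective i
  obtain ⟨⟨q, l⟩, rfl⟩ := finProdFinEquiv.surjective j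
  fin_cases k <;> fin_cases l <;> simp [blockJ, Matrix.symplecticJ, one_apply, Fin.ext_iff] <;>
    first | omega | split_ifs <;> simp <;> omega

/-- For `N` even, every antisymmetric unitary matrix `U ∈ U(N)` can be
written as `U = X J Xᵀ` with `X ∈ U(N)`, where `J` is the block-diagonal matrix with
`N/2` blocks `[[0,1],[-1,0]]`. -/
theorem stmt_14 (N : ℕ) (hN : Even N) (U : Matrix (Fin N) (Fin N) ℂ)
    (hU : U ∈ Matrix.unitaryGroup (Fin N) ℂ) (hanti : U = -Uᵀ) :
    ∃ X ∈ Matrix.unitaryGroup (Fin N) ℂ, U = X * blockJ N * Xᵀ := by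
  obtain ⟨m, rfl⟩ : ∃ m, N = m * 2 := ⟨N / 2, (Nat.div_mul_cancel hN.two_dvd).symm⟩
  rw [blockJ_eq_submatrix_symplecticJ]
  exact exists_mem_unitaryGroup_eq_mul_symplecticJ_mul_transpose _ hU hanti
end
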